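/- arXiv:2505.22656 — 2 statements merged into one kernel-verified Lean document; each statement's English description precedes it below -/
import Mathlib

section
/- Fix a < 0. As η → ∞, the projected flux matrices converge to the equilibrium splitting: A·P(η)⁻¹·diag(1,0)·P(η) → [[0,0],[1,−1/a]] and A·P(η)⁻¹·diag(0,1)·P(η) → [[0,1],[0,1/a]]. -/
noncomputable def Mmat (a η : ℝ) : Matrix (Fin 2) (Fin 2) ℝ :=
  !![-η * a, 1 + η; 1, 0]

noncomputable def lamP (a η : ℝ) : ℝ :=
  (-(a * η) + Real.sqrt (a ^ 2 * η ^ 2 + 4 * (η + 1))) / 2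

noncomputable def lamM (a η : ℝ) : ℝ :=
  (-(a * η) - Real.sqrt (a ^ 2 * η ^ 2 + 4 * (η + 1))) / 2

noncomputable def Lp (a η : ℝ) : Fin 2 → ℝ :=
  (Real.sqrt ((1 + η) ^ 2 + lamP a η ^ 2))⁻¹ • ![lamP a η, 1 + η]

noncomputable def Lm (a η : ℝ) : Fin 2 → ℝ :=
  (Real.sqrt ((1 + η) ^ 2 + lamM a η ^ 2))⁻¹ • ![lamM a η, 1 + η]

noncomputable def eucNorm (v : Fin 2 → ℝ) : ℝ :=
  Real.sqrt (v 0 ^ 2 + v 1 ^ 2)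

noncomputable def Pmat (a η : ℝ) : Matrix (Fin 2) (Fin 2) ℝ :=
  Matrix.of ![Lp a η, Lm a η]

def Amat : Matrix (Fin 2) (Fin 2) ℝ := !![0, 1; 1, 0]

/-!
Rescaling the rows of `P(η)` does not change `P(η)⁻¹ E P(η)` for diagonal `E`, so the
normalisations drop out and one may conjugate by the matrix with rows `(λ±, 1 + η)` instead.
Since `λ₊ λ₋ = -(1 + η)` this conjugate is explicit, and `A P(η)⁻¹ E P(η)` is affine in `s⁻¹`
and `η / s`, where `s = λ₊ - λ₋ = √(a²η² + 4(η + 1))`. As `s ~ -a η`, these tend to `0` and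
`-1 / a`.
-/

open Filter Matrix Topology

lemma Matrix.inv_mul_mul_eq_of_mul_eq {n R : Type*} [Fintype n] [DecidableEq n] [CommRing R]
    {V E X : Matrix n n R} (hV : IsUnit V.det) (h : V * X = E * V) : V⁻¹ * E * V = X := by
  rw [Matrix.mul_assoc, ← h, nonsing_inv_mul_cancel_left (A := V) X hV]

lemma Matrix.conj_diagonal_diagonal_mul {n R : Type*} [Fintype n] [DecidableEq n] [CommRing R]
    {d : n → R} (hd : IsUnit d) (e : n → R) (V : Matrix n n R) :
    (diagonal d * V)⁻¹ * diagonal e * (diagonal d * V) = V⁻¹ * diagonal e * V := by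
  have hde : (fun i => Ring.inverse d i * e i * d i) = e := by
    rw [← Pi.mul_def, ← Pi.mul_def, mul_comm _ e, mul_assoc, Ring.inverse_mul_cancel _ hd,
      mul_one]
  simp only [mul_inv_rev, inv_diagonal, Matrix.mul_assoc, diagonal_mul_diagonal]
  rw [← Matrix.mul_assoc (diagonal _), diagonal_mul_diagonal, hde]

lemma inv_mul_diagonal_mul_fin_two {K : Type*} [Field K] {p m c : K} (hpm : p ≠ m) (hc : c ≠ 0) (hroot : p * m = -c)
    (e₁ e₂ : K) :
    (!![p, c; m, c])⁻¹ * !![e₁, 0; 0, e₂] * !![p, c; m, c] =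
      (p - m)⁻¹ • !![e₁ * p - e₂ * m, (e₁ - e₂) * c; e₁ - e₂, e₂ * p - e₁ * m] := by
  refine Matrix.inv_mul_mul_eq_of_mul_eq ?_ ?_
  · rw [det_fin_two_of, isUnit_iff_ne_zero, mul_comm c m, ← sub_mul]
    exact mul_ne_zero (sub_ne_zero.2 hpm) hc
  · rw [Matrix.mul_smul, Matrix.mul_fin_two, Matrix.mul_fin_two]
    ext i j
    fin_cases i <;> fin_cases j <;>
      simp only [Fin.zero_eta, Fin.mk_one, Fin.isValue, Matrix.smul_apply, of_apply,
        cons_val', cons_val_zero, cons_val_one, cons_val_fin_one, smul_eq_mul] <;> grind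

noncomputable def discRoot (a η : ℝ) : ℝ := Real.sqrt (a ^ 2 * η ^ 2 + 4 * (η + 1))

section
variable {a η : ℝ}

lemma discRoot_pos (hη : -1 < η) : 0 < discRoot a η :=
  Real.sqrt_pos.2 (by nlinarith [sq_nonneg (a * η)])

lemma lamP_eq : lamP a η = (-(a * η) + discRoot a η) / 2 := rfl

lemma lamM_eq : lamM a η = (-(a * η) - discRoot a η) / 2 := rfl

lemma lamP_sub_lamM : lamP a η - lamM a η = discRoot a η := by
  rw [lamP_eq, lamM_eq]; ring

lemma lamP_mul_lamM (hη : -1 < η) : lamP a η * lamM a η = -(1 + η) := by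
  have h : discRoot a η ^ 2 = a ^ 2 * η ^ 2 + 4 * (η + 1) :=
    Real.sq_sqrt (by nlinarith [sq_nonneg (a * η)])
  rw [lamP_eq, lamM_eq]
  linear_combination (-1 / 4 : ℝ) * h

lemma Pmat_eq_diagonal_mul (a η : ℝ) :
    Pmat a η = diagonal ![(Real.sqrt ((1 + η) ^ 2 + lamP a η ^ 2))⁻¹,
      (Real.sqrt ((1 + η) ^ 2 + lamM a η ^ 2))⁻¹] * !![lamP a η, 1 + η; lamM a η, 1 + η] := by
  ext i j
  fin_cases i <;> fin_cases j <;> simp [Pmat, Lp, Lm]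

lemma inv_Pmat_mul_diagonal_mul_Pmat (hη : -1 < η) (e₁ e₂ : ℝ) :
    (Pmat a η)⁻¹ * !![e₁, 0; 0, e₂] * Pmat a η = (discRoot a η)⁻¹ •
      !![e₁ * lamP a η - e₂ * lamM a η, (e₁ - e₂) * (1 + η);
        e₁ - e₂, e₂ * lamP a η - e₁ * lamM a η] := by
  have h1η : 1 + η ≠ 0 := by linarith
  have hnorm (l : ℝ) : IsUnit (Real.sqrt ((1 + η) ^ 2 + l ^ 2))⁻¹ :=
    (inv_pos.2 (Real.sqrt_pos.2 (by positivity))).ne'.isUnit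
  rw [Pmat_eq_diagonal_mul, ← diagonal_vec2, conj_diagonal_diagonal_mul, diagonal_vec2,
    inv_mul_diagonal_mul_fin_two _ h1η (lamP_mul_lamM hη), lamP_sub_lamM]
  · rw [← sub_ne_zero, lamP_sub_lamM]
    exact (discRoot_pos hη).ne'
  · exact Pi.isUnit_iff.2 fun i => by fin_cases i <;> exact hnorm _

lemma Amat_mul_inv_Pmat_mul_diagonal_mul_Pmat (hη : -1 < η) (e₁ e₂ : ℝ) :
    Amat * (Pmat a η)⁻¹ * !![e₁, 0; 0, e₂] * Pmat a η =
      (discRoot a η)⁻¹ • ((e₁ - e₂) • 1) +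
        (η / discRoot a η) • ((e₁ - e₂) • !![0, a / 2; -a / 2, 1]) + ((e₁ + e₂) / 2) • Amat := by
  have hs := (discRoot_pos (a := a) hη).ne'
  rw [Matrix.mul_assoc Amat, Matrix.mul_assoc Amat, inv_Pmat_mul_diagonal_mul_Pmat hη, lamP_eq,
    lamM_eq]
  ext i j
  fin_cases i <;> fin_cases j <;>
    simp only [Amat, Matrix.mul_apply, Fin.sum_univ_two, one_fin_two, Fin.zero_eta, Fin.mk_one,
      Fin.isValue, Matrix.add_apply, Matrix.smul_apply, of_apply, cons_val', cons_val_zero,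
      cons_val_one, cons_val_fin_one, smul_eq_mul] <;>
    field_simp <;> ring

lemma tendsto_div_discRoot (ha : a < 0) :
    Tendsto (fun η => η / discRoot a η) atTop (𝓝 (-a⁻¹)) := by
  set g : ℝ → ℝ := fun x => (Real.sqrt (a ^ 2 + 4 * x + 4 * x ^ 2))⁻¹
  have hg0 : g 0 = -a⁻¹ := by
    simp [g, Real.sqrt_sq_eq_abs, abs_of_neg ha]
  have hg : ContinuousAt g 0 :=
    (Real.continuous_sqrt.comp (by fun_prop)).continuousAt.inv₀
      (by simpa [Real.sqrt_sq_eq_abs] using ha.ne)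
  refine (hg0 ▸ hg.tendsto.comp tendsto_inv_atTop_zero).congr' ?_
  filter_upwards [eventually_gt_atTop 0] with η hη
  have hdisc : discRoot a η = η * Real.sqrt (a ^ 2 + 4 * η⁻¹ + 4 * η⁻¹ ^ 2) := by
    rw [discRoot, show a ^ 2 * η ^ 2 + 4 * (η + 1) = η ^ 2 * (a ^ 2 + 4 * η⁻¹ + 4 * η⁻¹ ^ 2) by
      field_simp; ring, Real.sqrt_mul (sq_nonneg η), Real.sqrt_sq hη.le]
  rw [hdisc, Function.comp_apply, div_mul_cancel_left₀ hη.ne']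

lemma tendsto_inv_discRoot (ha : a < 0) :
    Tendsto (fun η => (discRoot a η)⁻¹) atTop (𝓝 0) := by
  refine (mul_zero (-a⁻¹) ▸ (tendsto_div_discRoot ha).mul tendsto_inv_atTop_zero).congr' ?_
  filter_upwards [eventually_gt_atTop 0] with η hη
  field_simp

theorem tendsto_Amat_mul_inv_Pmat_mul_diagonal_mul_Pmat (ha : a < 0) (e₁ e₂ : ℝ) :
    Tendsto (fun η => Amat * (Pmat a η)⁻¹ * !![e₁, 0; 0, e₂] * Pmat a η) atTop
      (𝓝 !![0, e₂; e₁, (e₂ - e₁) / a]) := by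
  have hlim :=
    (((tendsto_inv_discRoot ha).smul_const ((e₁ - e₂) • (1 : Matrix (Fin 2) (Fin 2) ℝ))).add
      ((tendsto_div_discRoot ha).smul_const ((e₁ - e₂) • !![0, a / 2; -a / 2, 1]))).add_const
      (((e₁ + e₂) / 2) • Amat)
  have ha0 := ha.ne
  have hval : (0 : ℝ) • ((e₁ - e₂) • (1 : Matrix (Fin 2) (Fin 2) ℝ)) +
      (-a⁻¹) • ((e₁ - e₂) • !![0, a / 2; -a / 2, 1]) + ((e₁ + e₂) / 2) • Amat =
      !![0, e₂; e₁, (e₂ - e₁) / a] := by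
    ext i j
    fin_cases i <;> fin_cases j <;>
      simp only [Amat, one_fin_two, Fin.zero_eta, Fin.mk_one, Fin.isValue, Matrix.add_apply,
        Matrix.smul_apply, of_apply, cons_val', cons_val_zero, cons_val_one, cons_val_fin_one,
        smul_eq_mul] <;>
      field_simp <;> ring
  refine hval ▸ hlim.congr' ?_
  filter_upwards [eventually_gt_atTop (-1)] with η hη
  exact (Amat_mul_inv_Pmat_mul_diagonal_mul_Pmat hη e₁ e₂).symm
end


theorem stmt11 (a : ℝ) (ha : a < 0) :
    Filter.Tendsto (fun η => Amat * (Pmat a η)⁻¹ * !![(1:ℝ), 0; 0, 0] * Pmat a η)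
      Filter.atTop (nhds !![(0:ℝ), 0; 1, -1 / a]) ∧
    Filter.Tendsto (fun η => Amat * (Pmat a η)⁻¹ * !![(0:ℝ), 0; 0, 1] * Pmat a η)
      Filter.atTop (nhds !![(0:ℝ), 1; 0, 1 / a]) := by
  constructor
  · convert tendsto_Amat_mul_inv_Pmat_mul_diagonal_mul_Pmat ha 1 0 using 3
    norm_num [neg_div]
  · convert tendsto_Amat_mul_inv_Pmat_mul_diagonal_mul_Pmat ha 0 1 using 3
    norm_num
end

section
/- Fix a ∈ ℝ with a ≠ 0 and let A be the 2×2 matrix with rows (0,1) and (1,0) (so A⁻¹ = A). If a < 0, then L₋(η)·A⁻¹ → (1, 0) as η → ∞; if a > 0, then L₋(η)·A⁻¹ → (1, −a)/√(1+a²) as η → ∞. -/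
/-!
Multiplying by `A⁻¹ = A` swaps the coordinates, so `L₋(η) A⁻¹` is the unit vector in the
direction of `(1, λ₋(η) / (1 + η))`. The ratio `λ₋(η) / (1 + η)` tends to `(-a - |a|) / 2`,
which is `0` for `a < 0` and `-a` for `a > 0`.
-/

open Filter Real Topology

noncomputable def unitDir (t : ℝ) : Fin 2 → ℝ :=
  (√(1 + t ^ 2))⁻¹ • ![1, t]

lemma continuous_unitDir : Continuous unitDir := by
  have hne (t : ℝ) : √(1 + t ^ 2) ≠ 0 := (Real.sqrt_pos.mpr (by positivity)).ne'
  unfold unitDir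
  fun_prop (disch := exact hne _)

lemma inv_sqrt_smul_eq_unitDir {c : ℝ} (hc : 0 < c) (l : ℝ) :
    (√(c ^ 2 + l ^ 2))⁻¹ • ![c, l] = unitDir (l / c) := by
  have hnorm : √(c ^ 2 + l ^ 2) = c * √(1 + (l / c) ^ 2) := by
    rw [show c ^ 2 + l ^ 2 = c ^ 2 * (1 + (l / c) ^ 2) by field_simp,
      Real.sqrt_mul (sq_nonneg c), Real.sqrt_sq hc.le]
  ext i
  fin_cases i <;> simp [unitDir, hnorm] <;> field_simp

lemma Amat_inv : Amat⁻¹ = Amat :=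
  Matrix.inv_eq_right_inv (by simp [Amat, Matrix.one_fin_two])

lemma vecMul_Amat (x y : ℝ) : Matrix.vecMul ![x, y] Amat = ![y, x] := by
  ext i
  fin_cases i <;> simp [Amat, Matrix.vecMul, dotProduct, Fin.sum_univ_two]

lemma vecMul_Lm_Amat_inv (a : ℝ) {η : ℝ} (hη : -1 < η) :
    Matrix.vecMul (Lm a η) Amat⁻¹ = unitDir (lamM a η / (1 + η)) := by
  rw [Amat_inv, Lm, Matrix.smul_vecMul, vecMul_Amat]
  exact inv_sqrt_smul_eq_unitDir (by linarith : (0 : ℝ) < 1 + η) _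

/-- After the substitution `t = η⁻¹` the ratio becomes a function continuous at `t = 0`. -/
lemma tendsto_lamM_div_one_add (a : ℝ) :
    Tendsto (fun η => lamM a η / (1 + η)) atTop (𝓝 ((-a - |a|) / 2)) := by
  set F : ℝ → ℝ := fun t => (-a - √(a ^ 2 + 4 * t + 4 * t ^ 2)) / (2 * (1 + t)) with hF
  have hFc : ContinuousAt F 0 :=
    (continuousAt_const.sub (Real.continuous_sqrt.continuousAt.comp (by fun_prop))).div
      (by fun_prop) (by norm_num)
  have hF0 : F 0 = (-a - |a|) / 2 := by simp [hF, Real.sqrt_sq_eq_abs]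
  rw [← hF0]
  refine (hFc.tendsto.comp tendsto_inv_atTop_zero).congr' ?_
  filter_upwards [eventually_gt_atTop (0 : ℝ)] with η hη
  have hsqrt : √(a ^ 2 * η ^ 2 + 4 * (η + 1)) = η * √(a ^ 2 + 4 * η⁻¹ + 4 * η⁻¹ ^ 2) := by
    rw [show a ^ 2 * η ^ 2 + 4 * (η + 1) = η ^ 2 * (a ^ 2 + 4 * η⁻¹ + 4 * η⁻¹ ^ 2) by
        field_simp; ring,
      Real.sqrt_mul (sq_nonneg η), Real.sqrt_sq hη.le]
  simp only [Function.comp, hF, lamM, hsqrt]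
  field_simp
  ring

lemma tendsto_vecMul_Lm_Amat_inv (a : ℝ) :
    Tendsto (fun η => Matrix.vecMul (Lm a η) Amat⁻¹) atTop
      (𝓝 (unitDir ((-a - |a|) / 2))) := by
  refine ((continuous_unitDir.tendsto _).comp (tendsto_lamM_div_one_add a)).congr' ?_
  filter_upwards [eventually_gt_atTop (0 : ℝ)] with η hη
  exact (vecMul_Lm_Amat_inv a (by linarith)).symm

theorem stmt15_general (a : ℝ) :
    (a < 0 → Filter.Tendsto (fun η => Matrix.vecMul (Lm a η) Amat⁻¹)
      Filter.atTop (nhds ![1, 0])) ∧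
    (0 < a → Filter.Tendsto (fun η => Matrix.vecMul (Lm a η) Amat⁻¹)
      Filter.atTop (nhds ((Real.sqrt (1 + a ^ 2))⁻¹ • ![1, -a]))) := by
  refine ⟨fun hneg => ?_, fun hpos => ?_⟩
  · convert tendsto_vecMul_Lm_Amat_inv a using 2
    rw [abs_of_neg hneg, sub_neg_eq_add, neg_add_cancel, zero_div]
    simp [unitDir]
  · convert tendsto_vecMul_Lm_Amat_inv a using 2
    rw [abs_of_pos hpos, show (-a - a) / 2 = -a by ring, unitDir, neg_sq]

theorem stmt15 (a : ℝ) (ha : a ≠ 0) :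
    (a < 0 → Filter.Tendsto (fun η => Matrix.vecMul (Lm a η) Amat⁻¹)
      Filter.atTop (nhds ![1, 0])) ∧
    (0 < a → Filter.Tendsto (fun η => Matrix.vecMul (Lm a η) Amat⁻¹)
      Filter.atTop (nhds ((Real.sqrt (1 + a ^ 2))⁻¹ • ![1, -a]))) :=
  stmt15_general a
end
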